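/- Fix a real number x_w and let ε be a random variable with continuous probability density function (not necessarily mean zero). Then as m → ∞, the probability that the fractional part of x_w + ε does not lie in the green list G converges to 1/2: P(x_w + ε − ⌊x_w + ε⌋ ∉ G) → 1/2. -/

import Mathlib

open MeasureTheory Set Filter

def greenInterval (m : ℕ) (b : Fin m → Bool) (k : Fin m) : Set ℝ :=
  Set.Icc ((2 * (k : ℝ) + (if b k then 1 else 0)) / (2 * m))
          ((2 * (k : ℝ) + (if b k then 1 else 0) + 1) / (2 * m))

def greenSet (m : ℕ) (b : Fin m → Bool) : Set ℝ :=
  ⋃ k : Fin m, greenInterval m b k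

/-!
Cut `ℝ` into cells `[j/(2m), (j+1)/(2m)]`. For every even `j` the green list contains exactly
one of the cells `j` and `j + 1`, so with `h = 1/(2m)` the function `φ = 𝟙_red - 1/2` satisfies
`φ(x + h) = -φ(x)` on the even cells. Substituting `x ↦ x + h` on the odd cells turns
`∫ φ a` into `∫_even φ(x) (a(x) - a(x + h)) dx`, which is at most `½ ∫ |a(x + h) - a(x)| dx`;
this tends to `0` as `h → 0` because translation is continuous in `L¹`.
-/

open Topology

section AddGroup

variable {G : Type*} [AddGroup G] [MeasurableSpace G] {μ : Measure G}

theorem MeasureTheory.Integrable.tendsto_integral_norm_comp_add_left_sub {E : Type*}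
    [NormedAddCommGroup E] [TopologicalSpace G] [IsTopologicalAddGroup G] [R1Space G]
    [BorelSpace G] [IsLocallyFiniteMeasure μ] [μ.InnerRegularCompactLTTop] [μ.IsAddLeftInvariant]
    {g : G → E} (hg : Integrable g μ) :
    Tendsto (fun t => ∫ x, ‖g (t + x) - g x‖ ∂μ) (𝓝 0) (𝓝 0) := by
  have : Fact ((1 : ENNReal) ≠ ⊤) := ⟨ENNReal.one_ne_top⟩
  have hcont : Continuous fun t : G => DomAddAct.mk t +ᵥ hg.toL1 g :=
    DomAddAct.continuous_mk.vadd continuous_const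
  have hlim := hcont.tendsto 0
  simp only [DomAddAct.mk_zero, zero_vadd] at hlim
  refine (tendsto_iff_dist_tendsto_zero.1 hlim).congr fun t => ?_
  rw [L1.dist_eq_integral_dist]
  apply integral_congr_ae
  filter_upwards [DomAddAct.vadd_Lp_ae_eq (DomAddAct.mk t) (hg.toL1 g), hg.coeFn_toL1,
    (measurePreserving_add_left μ t).quasiMeasurePreserving.ae hg.coeFn_toL1] with x h1 h2 h3
  rw [h1, h2, dist_eq_norm, Equiv.symm_apply_apply, vadd_eq_add, h3]

variable [MeasurableAdd G] [μ.IsAddLeftInvariant]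

theorem abs_integral_mul_le_of_map_add_eq_neg {φ g : G → ℝ} {C : ℝ} {E : Set G} {h : G}
    (hφ : AEStronglyMeasurable φ μ) (hφC : ∀ x, |φ x| ≤ C) (hg : Integrable g μ)
    (hE : MeasurableSet E) (hEh : ∀ x, h + x ∈ E ↔ x ∉ E) (hφh : ∀ x ∈ E, φ (h + x) = -φ x) :
    |∫ x, φ x * g x ∂μ| ≤ C * ∫ x, ‖g (h + x) - g x‖ ∂μ := by
  have hgh : Integrable (fun x => g (h + x)) μ := hg.comp_add_left h
  have hφg : Integrable (fun x => φ x * g x) μ := hg.bdd_mul hφ (ae_of_all _ hφC)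
  have hφgh : Integrable (fun x => φ x * g (h + x)) μ := hgh.bdd_mul hφ (ae_of_all _ hφC)
  have hC : 0 ≤ C := (abs_nonneg _).trans (hφC h)
  -- the substitution `y = h + x` carries `E` onto `Eᶜ`
  have hcompl : ∫ x in Eᶜ, φ x * g x ∂μ = -∫ x in E, φ x * g (h + x) ∂μ := by
    rw [← integral_indicator hE.compl, ← integral_add_left_eq_self _ h, ← integral_indicator hE,
      ← integral_neg]
    congr 1 with x
    by_cases hx : x ∈ E
    · have hxE : h + x ∈ Eᶜ := fun hxE => (hEh x).1 hxE hx
      rw [indicator_of_mem hxE, indicator_of_mem hx, hφh x hx, neg_mul]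
    · have hxE : h + x ∉ Eᶜ := not_not.2 ((hEh x).2 hx)
      rw [indicator_of_notMem hxE, indicator_of_notMem hx, neg_zero]
  have hsplit : ∫ x, φ x * g x ∂μ = ∫ x in E, φ x * (g x - g (h + x)) ∂μ := by
    rw [← integral_add_compl hE hφg, hcompl, ← sub_eq_add_neg,
      ← integral_sub hφg.integrableOn hφgh.integrableOn]
    simp only [mul_sub]
  calc |∫ x, φ x * g x ∂μ|
      ≤ ∫ x in E, |φ x * (g x - g (h + x))| ∂μ := by
        rw [hsplit]; exact abs_integral_le_integral_abs
    _ ≤ ∫ x in E, C * ‖g (h + x) - g x‖ ∂μ := by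
        refine integral_mono_of_nonneg (ae_of_all _ fun _ => abs_nonneg _)
          ((hgh.sub hg).norm.const_mul C).integrableOn (ae_of_all _ fun x => ?_)
        dsimp only
        rw [abs_mul, abs_sub_comm, ← Real.norm_eq_abs (g _ - _)]
        exact mul_le_mul_of_nonneg_right (hφC x) (norm_nonneg _)
    _ ≤ C * ∫ x, ‖g (h + x) - g x‖ ∂μ := by
        rw [← integral_const_mul]
        exact setIntegral_le_integral ((hgh.sub hg).norm.const_mul C)
          (ae_of_all _ fun x => mul_nonneg hC (norm_nonneg _))

theorem abs_setIntegral_sub_half_integral_le {g : G → ℝ} {R E : Set G} {h : G}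
    (hg : Integrable g μ) (hR : MeasurableSet R) (hE : MeasurableSet E)
    (hEh : ∀ x, h + x ∈ E ↔ x ∉ E) (hRh : ∀ x ∈ E, h + x ∈ R ↔ x ∉ R) :
    |∫ x in R, g x ∂μ - (∫ x, g x ∂μ) / 2| ≤ (∫ x, ‖g (h + x) - g x‖ ∂μ) / 2 := by
  set φ : G → ℝ := fun x => R.indicator 1 x - 1 / 2
  have hφC : ∀ x, |φ x| ≤ 1 / 2 := fun x => by
    by_cases hx : x ∈ R <;> norm_num [φ, hx]
  have hφh : ∀ x ∈ E, φ (h + x) = -φ x := fun x hx => by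
    by_cases hxR : x ∈ R
    · simp only [φ, indicator_of_mem hxR, indicator_of_notMem (mt (hRh x hx).1 (not_not.2 hxR))]
      norm_num
    · simp only [φ, indicator_of_notMem hxR, indicator_of_mem ((hRh x hx).2 hxR)]
      norm_num
  have hφg : ∫ x, φ x * g x ∂μ = ∫ x in R, g x ∂μ - (∫ x, g x ∂μ) / 2 := by
    have hind : (fun x => R.indicator 1 x * g x) = R.indicator g := by
      ext x; by_cases hx : x ∈ R <;> simp [hx]
    simp only [φ, sub_mul]
    rw [integral_sub (hind ▸ hg.indicator hR) (hg.const_mul _), hind, integral_indicator hR,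
      integral_const_mul, one_div, inv_mul_eq_div]
  have hbound := abs_integral_mul_le_of_map_add_eq_neg (φ := φ)
    ((measurable_one.indicator hR).sub measurable_const).aestronglyMeasurable hφC hg hE hEh hφh
  rw [hφg] at hbound
  linarith

end AddGroup

-- Cell `j` is green when, reduced mod 1, it is the half of its pair chosen by `b`.
def IsGreenCell (m : ℕ) (b : Fin m → Bool) (j : ℤ) : Prop :=
  ∃ k : Fin m, j % (2 * m) = 2 * k + if b k then 1 else 0

lemma exists_two_mul_add_ite_eq_iff {m : ℕ} (b : Fin m → Bool) (k₀ : Fin m) (c : Bool) :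
    (∃ k : Fin m, 2 * (k₀ : ℤ) + (if c then 1 else 0) = 2 * k + if b k then 1 else 0) ↔
      b k₀ = c := by
  constructor
  · rintro ⟨k, hk⟩
    obtain rfl : k = k₀ := by
      ext
      cases b k <;> cases c <;> simp only [if_true, if_false, Bool.false_eq_true] at hk <;> omega
    cases hb : b k <;> cases c <;> simp_all
  · rintro rfl
    exact ⟨k₀, rfl⟩

lemma isGreenCell_add_one_iff {m : ℕ} (hm : 0 < m) (b : Fin m → Bool) {j : ℤ} (hj : Even j) :
    IsGreenCell m b (j + 1) ↔ ¬ IsGreenCell m b j := by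
  have hn : (0 : ℤ) < 2 * m := by positivity
  obtain ⟨q, hq⟩ : Even (j % (2 * m)) :=
    Int.even_iff.2 (by rw [Int.emod_emod_of_dvd _ (dvd_mul_right 2 _)]; exact Int.even_iff.1 hj)
  have hr0 := Int.emod_nonneg j hn.ne'
  have hr1 := Int.emod_lt_of_pos j hn
  have hsucc : (j + 1) % (2 * m) = j % (2 * m) + 1 := by
    rw [Int.add_emod, Int.emod_eq_of_lt (a := 1) (by omega) (by omega)]
    exact Int.emod_eq_of_lt (by omega) (by omega)
  set k₀ : Fin m := ⟨q.toNat, by omega⟩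
  have hk₀ : j % (2 * m) = 2 * (k₀ : ℤ) := by simp [k₀]; omega
  have hfalse := exists_two_mul_add_ite_eq_iff b k₀ false
  have htrue := exists_two_mul_add_ite_eq_iff b k₀ true
  simp only [if_true, if_false, Bool.false_eq_true, add_zero] at hfalse htrue
  rw [IsGreenCell, IsGreenCell, hsucc, hk₀, hfalse, htrue]
  simp

lemma fract_mem_greenSet_iff {m : ℕ} (hm : 0 < m) (b : Fin m → Bool) {x : ℝ}
    (hx : ∀ j : ℤ, x * (2 * m) ≠ j) :
    Int.fract x ∈ greenSet m b ↔ IsGreenCell m b ⌊x * (2 * m)⌋ := by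
  have hn : (0 : ℝ) < 2 * m := by positivity
  have hfract : Int.fract x * (2 * m) = x * (2 * m) - ((⌊x⌋ * (2 * m) : ℤ) : ℝ) := by
    push_cast [Int.fract]; ring
  have hfloor : ⌊Int.fract x * (2 * m)⌋ = ⌊x * (2 * m)⌋ % (2 * m) := by
    have h0 : 0 ≤ ⌊Int.fract x * (2 * m)⌋ := Int.floor_nonneg.2 (by positivity [Int.fract_nonneg x])
    have h1 : ⌊Int.fract x * (2 * m)⌋ < 2 * m := Int.floor_lt.2 (by
      push_cast; nlinarith [Int.fract_lt_one x])
    rw [hfract, Int.floor_sub_intCast] at h0 h1 ⊢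
    rw [← Int.emod_eq_of_lt h0 h1, Int.sub_mul_emod_self_right]
  have hgrid : ∀ j : ℤ, Int.fract x * (2 * m) ≠ j := fun j hj =>
    hx (j + ⌊x⌋ * (2 * m)) (by push_cast at hfract ⊢; linarith)
  rw [IsGreenCell, ← hfloor]
  simp only [greenSet, greenInterval, mem_iUnion, mem_Icc]
  refine exists_congr fun k => ?_
  have hk := hgrid (2 * k + (if b k then 1 else 0) + 1)
  rw [div_le_iff₀ hn, le_div_iff₀ hn, Int.floor_eq_iff]
  push_cast at hk ⊢
  exact and_congr_right fun _ => ⟨fun h => h.lt_of_ne hk, le_of_lt⟩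

theorem toReal_withDensity_ofReal_apply {α : Type*} [MeasurableSpace α] {μ : Measure α}
    [SFinite μ] {f : α → ℝ} (hf : Integrable f μ) (hf0 : 0 ≤ᵐ[μ] f) (s : Set α) :
    ((μ.withDensity fun x => ENNReal.ofReal (f x)) s).toReal = ∫ x in s, f x ∂μ := by
  rw [withDensity_apply' _ s, ← ofReal_integral_eq_lintegral_ofReal hf.integrableOn
    (ae_restrict_of_ae hf0), ENNReal.toReal_ofReal (setIntegral_nonneg_of_ae_restrict
    (ae_restrict_of_ae hf0))]

lemma ae_add_mul_ne_intCast (c : ℝ) {n : ℝ} (hn : n ≠ 0) :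
    ∀ᵐ x : ℝ, ∀ j : ℤ, (c + x) * n ≠ j := by
  rw [ae_all_iff]
  intro j
  filter_upwards [(Set.countable_singleton (j / n - c)).ae_notMem volume] with x hx hxj
  exact hx (by rw [mem_singleton_iff, ← hxj]; field_simp; ring)

theorem abs_setIntegral_fract_notMem_greenSet_sub_half_le {g : ℝ → ℝ} (hg : Integrable g)
    (hg1 : ∫ x, g x = 1) (c : ℝ) {m : ℕ} (hm : 0 < m) (b : Fin m → Bool) :
    |(∫ x in {e | Int.fract (c + e) ∉ greenSet m b}, g x) - 1 / 2| ≤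
      (∫ x, ‖g ((2 * m : ℝ)⁻¹ + x) - g x‖) / 2 := by
  have hn : (2 * m : ℝ) ≠ 0 := by positivity
  have hcell : Measurable fun e : ℝ => ⌊(c + e) * (2 * m)⌋ :=
    ((measurable_const_add c).mul_const _).floor
  have hshift (e : ℝ) : ⌊(c + ((2 * m : ℝ)⁻¹ + e)) * (2 * m)⌋ = ⌊(c + e) * (2 * m)⌋ + 1 := by
    rw [add_left_comm, add_mul, inv_mul_cancel₀ hn, add_comm, Int.floor_add_one]
  set R := {e : ℝ | ¬ IsGreenCell m b ⌊(c + e) * (2 * m)⌋}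
  have hS : {e | Int.fract (c + e) ∉ greenSet m b} =ᵐ[volume] R := by
    filter_upwards [ae_add_mul_ne_intCast c hn] with e he
    exact propext (not_congr (fract_mem_greenSet_iff hm b he))
  have hR : MeasurableSet R := hcell (.of_discrete (s := {j | ¬ IsGreenCell m b j}))
  have hE : MeasurableSet {e : ℝ | Even ⌊(c + e) * (2 * m)⌋} :=
    hcell (.of_discrete (s := {j | Even j}))
  rw [setIntegral_congr_set hS, ← hg1]
  refine abs_setIntegral_sub_half_integral_le hg hR hE (fun e => ?_) (fun e he => ?_)
  · simp only [mem_ofPred_eq, hshift, Int.even_add_one]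
  · simp only [R, mem_ofPred_eq, hshift, isGreenCell_add_one_iff hm b he]

theorem attack_success_rate_general (xw : ℝ) (a : ℝ → ℝ)
    (ha_nonneg : ∀ x, 0 ≤ a x) (ha_int : ∫ x, a x = 1)
    (b : ∀ m : ℕ, Fin m → Bool) :
    Tendsto (fun m : ℕ =>
      ((volume.withDensity fun x => ENNReal.ofReal (a x))
        {e : ℝ | Int.fract (xw + e) ∉ greenSet m (b m)}).toReal)
      atTop (nhds (1 / 2)) := by
  have ha : Integrable a := Integrable.of_integral_ne_zero (by simp [ha_int])
  have hstep : Tendsto (fun m : ℕ => (2 * (m : ℝ))⁻¹) atTop (𝓝 0) :=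
    tendsto_inv_atTop_zero.comp (tendsto_natCast_atTop_atTop.const_mul_atTop two_pos)
  have hbound : Tendsto (fun m : ℕ => (∫ x, ‖a ((2 * m : ℝ)⁻¹ + x) - a x‖) / 2) atTop (𝓝 0) := by
    simpa using (ha.tendsto_integral_norm_comp_add_left_sub.comp hstep).div_const 2
  rw [tendsto_iff_norm_sub_tendsto_zero]
  refine squeeze_zero' (.of_forall fun _ => norm_nonneg _) ?_ hbound
  filter_upwards [eventually_gt_atTop 0] with m hm
  rw [toReal_withDensity_ofReal_apply ha (.of_forall ha_nonneg), Real.norm_eq_abs]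
  exact abs_setIntegral_fract_notMem_greenSet_sub_half_le ha ha_int xw hm (b m)

/-- **Attack success rate.** Fix `x_w ∈ ℝ` and let `ε` be a random variable with a
continuous probability density `a` (not necessarily mean zero). Then as `m → ∞` (for any
choice sequence of green lists), the probability that the fractional part of `x_w + ε`
does not lie in the green list converges to `1/2`. -/
theorem attack_success_rate (xw : ℝ) (a : ℝ → ℝ) (ha_cont : Continuous a)
    (ha_nonneg : ∀ x, 0 ≤ a x) (ha_int : ∫ x, a x = 1)
    (b : ∀ m : ℕ, Fin m → Bool) :
    Tendsto (fun m : ℕ =>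
      ((volume.withDensity fun x => ENNReal.ofReal (a x))
        {e : ℝ | Int.fract (xw + e) ∉ greenSet m (b m)}).toReal)
      atTop (nhds (1 / 2)) :=
  attack_success_rate_general xw a ha_nonneg ha_int b
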